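/- arXiv:1706.04850 — 5 statements merged into one kernel-verified Lean document; each statement's English description precedes it below -/
import Mathlib

section
/- Right multiplication by a cocycle gives a bijection between the first non-abelian cohomology of the Serre twist and of the original group: if α is a 1-cocycle of G valued in U, then the map sending a 1-cocycle β of the twisted G-group _αU to the pointwise product g ↦ β(g)·α(g) induces a well-defined bijection H¹(G, _αU) → H¹(G, U) taking the trivial class to the class [α]. -/
/-- A 1-cocycle of a group `G` acting on a group `U` via `φ`. -/
def IsCocycle {G U : Type*} [Group G] [Group U] (φ : G →* MulAut U) (α : G → U) : Prop :=
  ∀ g h : G, α (g * h) = α g * φ g (α h)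

/-- Two maps `G → U` are cohomologous. -/
def Cohomologous {G U : Type*} [Group G] [Group U] (φ : G →* MulAut U) (α β : G → U) : Prop :=
  ∃ u : U, ∀ g : G, β g = u⁻¹ * α g * φ g u

/-- The relation on cocycles defining `H¹(G,U)`. -/
def H1Rel {G U : Type*} [Group G] [Group U] (φ : G →* MulAut U)
    (a b : {α : G → U // IsCocycle φ α}) : Prop :=
  Cohomologous φ a.1 b.1

/-- Non-abelian first cohomology `H¹(G,U)` as a quotient of cocycles. -/
def H1 {G U : Type*} [Group G] [Group U] (φ : G →* MulAut U) : Type _ :=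
  Quot (H1Rel φ)

/-- A 1-cocycle of `G` valued in the Serre twist `_αU`, whose `G`-action is
`g ·_α u = α(g) · g(u) · α(g)⁻¹`. -/
def IsTwCocycle {G U : Type*} [Group G] [Group U] (φ : G →* MulAut U) (α β : G → U) : Prop :=
  ∀ g h : G, β (g * h) = β g * (α g * φ g (β h) * (α g)⁻¹)

/-- The cohomologous relation for the Serre twist `_αU`. -/
def TwCohomologous {G U : Type*} [Group G] [Group U] (φ : G →* MulAut U)
    (α β β' : G → U) : Prop :=
  ∃ u : U, ∀ g : G, β' g = u⁻¹ * β g * (α g * φ g u * (α g)⁻¹)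

/-- The relation on twisted cocycles defining `H¹(G, _αU)`. -/
def H1twRel {G U : Type*} [Group G] [Group U] (φ : G →* MulAut U) (α : G → U)
    (a b : {β : G → U // IsTwCocycle φ α β}) : Prop :=
  TwCohomologous φ α a.1 b.1

/-- Non-abelian first cohomology of the Serre twist `H¹(G, _αU)`. -/
def H1tw {G U : Type*} [Group G] [Group U] (φ : G →* MulAut U) (α : G → U) : Type _ :=
  Quot (H1twRel φ α)


section Aux

variable {G U : Type*} [Group G] [Group U] (φ : G →* MulAut U) (α : G → U)

lemma hmul_aux (hα : IsCocycle φ α) :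
    ∀ β : G → U, IsTwCocycle φ α β → IsCocycle φ (fun g => β g * α g) := by
  intro β hβ g h
  simp only [hβ g h, hα g h, map_mul]
  group

lemma hdiv_aux (hα : IsCocycle φ α) :
    ∀ γ : G → U, IsCocycle φ γ → IsTwCocycle φ α (fun g => γ g * (α g)⁻¹) := by
  intro γ hγ g h
  simp only [hγ g h, hα g h, map_mul, map_inv]
  group

end Aux

/-- Right multiplication by the cocycle `α` induces a well-defined bijection
`H¹(G, _αU) → H¹(G, U)` sending the trivial class to the class `[α]`. -/
theorem serre_twist_H1_bijection {G U : Type*} [Group G] [Group U]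
    (φ : G →* MulAut U) (α : G → U) (hα : IsCocycle φ α) :
    ∃ (hmul : ∀ β : G → U, IsTwCocycle φ α β → IsCocycle φ (fun g => β g * α g))
      (F : H1tw φ α → H1 φ),
      Function.Bijective F ∧
      (∀ (β : G → U) (hβ : IsTwCocycle φ α β),
        F (Quot.mk (H1twRel φ α) ⟨β, hβ⟩) =
          Quot.mk (H1Rel φ) ⟨fun g => β g * α g, hmul β hβ⟩) ∧
      (∀ h1 : IsTwCocycle φ α (fun _ => 1),
        F (Quot.mk (H1twRel φ α) ⟨fun _ => 1, h1⟩) = Quot.mk (H1Rel φ) ⟨α, hα⟩) := by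

  refine ⟨hmul_aux φ α hα, ?_⟩
  have hdiv := hdiv_aux φ α hα
  refine ⟨Quot.lift (fun b => Quot.mk (H1Rel φ) ⟨fun g => b.1 g * α g, hmul_aux φ α hα b.1 b.2⟩)
      ?_, ?_, ?_, ?_⟩
  · rintro a b ⟨u, hu⟩
    apply Quot.sound
    exact ⟨u, fun g => by simp only [hu g]; group⟩
  · constructor
    · rintro ⟨a⟩ ⟨b⟩ h
      have h' := Quot.eqvGen_exact h
      -- H1Rel is not an equivalence relation a priori; use EqvGen
      apply Quot.sound
      have key : ∀ x y : {α : G → U // IsCocycle φ α},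
          Relation.EqvGen (H1Rel φ) x y → H1Rel φ x y := by
        intro x y hxy
        induction hxy with
        | rel x y h => exact h
        | refl x => exact ⟨1, fun g => by simp⟩
        | symm x y h ih =>
          obtain ⟨u, hu⟩ := ih
          exact ⟨u⁻¹, fun g => by simp [hu g]; group⟩
        | trans x y z h1 h2 ih1 ih2 =>
          obtain ⟨u, hu⟩ := ih1
          obtain ⟨v, hv⟩ := ih2
          exact ⟨u * v, fun g => by simp [hv g, hu g]; group⟩
      obtain ⟨u, hu⟩ := key _ _ h'
      refine ⟨u, fun g => ?_⟩
      have := hu g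
      simp only at this
      have hb : b.1 g * α g = u⁻¹ * (a.1 g * α g) * φ g u := this
      calc b.1 g = (b.1 g * α g) * (α g)⁻¹ := by group
        _ = u⁻¹ * (a.1 g * α g) * φ g u * (α g)⁻¹ := by rw [hb]
        _ = u⁻¹ * a.1 g * (α g * φ g u * (α g)⁻¹) := by group
    · rintro ⟨c⟩
      refine ⟨Quot.mk _ ⟨fun g => c.1 g * (α g)⁻¹, hdiv c.1 c.2⟩, ?_⟩
      simp only [Quot.lift]
      congr 1
      ext g
      group
  · intro β hβ; rfl
  · intro h1
    apply Quot.sound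
    exact ⟨1, fun g => by simp⟩
end

section
/- Surjectivity of π¹ onto the quotient when the kernel is cogenerated in degree ≤ 1: suppose 1 → Z^n → U^n → Q^n → 1 is exact for n = 0,1,2, compatibly with all coface and codegeneracy maps, and suppose that the map (s⁰, s¹) : Z² → Z¹ × Z¹ has trivial kernel (if z ∈ Z² satisfies s⁰(z) = 1 and s¹(z) = 1 then z = 1). Then every 1-cocycle q₁ ∈ Z¹(Q^•) lifts to a 1-cocycle in Z¹(U^•); in particular π¹(U^•) → π¹(Q^•) is surjective. -/
/-- Given a degreewise short exact sequence `1 → Z^n → U^n → Q^n → 1` of 2-truncated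
cosimplicial groups (encoded by degreewise surjections `p_n : U^n → Q^n`, the kernels
playing the role of `Z^n`), if the kernel is cogenerated in degree ≤ 1 (an element of
`Z² = ker p₂` killed by both codegeneracies is trivial), then every 1-cocycle of `Q^•`
lifts to a 1-cocycle of `U^•`; in particular `π¹(U^•) → π¹(Q^•)` is surjective. -/
theorem cocycle_lifts_of_kernel_cogenerated_in_low_degree
    {U0 U1 U2 Q0 Q1 Q2 : Type*}
    [Group U0] [Group U1] [Group U2] [Group Q0] [Group Q1] [Group Q2]
    -- cofaces and codegeneracies of U^•
    (a0 a1 : U0 →* U1) (b0 b1 b2 : U1 →* U2)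
    (s : U1 →* U0) (t0 t1 : U2 →* U1)
    -- cofaces and codegeneracies of Q^•
    (aQ0 aQ1 : Q0 →* Q1) (bQ0 bQ1 bQ2 : Q1 →* Q2)
    (sQ : Q1 →* Q0) (tQ0 tQ1 : Q2 →* Q1)
    -- the degreewise surjection U^• → Q^•
    (p0 : U0 →* Q0) (p1 : U1 →* Q1) (p2 : U2 →* Q2)
    -- cosimplicial identities for U^•
    (hd1 : ∀ x : U0, b1 (a0 x) = b0 (a0 x))
    (hd2 : ∀ x : U0, b2 (a0 x) = b0 (a1 x))
    (hd3 : ∀ x : U0, b2 (a1 x) = b1 (a1 x))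
    (hs0 : ∀ x : U0, s (a0 x) = x)
    (hs1 : ∀ x : U0, s (a1 x) = x)
    (ht00 : ∀ x : U1, t0 (b0 x) = x)
    (ht01 : ∀ x : U1, t0 (b1 x) = x)
    (ht02 : ∀ x : U1, t0 (b2 x) = a1 (s x))
    (ht10 : ∀ x : U1, t1 (b0 x) = a0 (s x))
    (ht11 : ∀ x : U1, t1 (b1 x) = x)
    (ht12 : ∀ x : U1, t1 (b2 x) = x)
    (hss : ∀ x : U2, s (t1 x) = s (t0 x))
    -- exactness: degreewise surjectivity
    (hp0 : Function.Surjective p0)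
    (hp1 : Function.Surjective p1)
    (hp2 : Function.Surjective p2)
    -- compatibility of p with all cofaces and codegeneracies
    (hc1 : ∀ x : U0, p1 (a0 x) = aQ0 (p0 x))
    (hc2 : ∀ x : U0, p1 (a1 x) = aQ1 (p0 x))
    (hc3 : ∀ x : U1, p2 (b0 x) = bQ0 (p1 x))
    (hc4 : ∀ x : U1, p2 (b1 x) = bQ1 (p1 x))
    (hc5 : ∀ x : U1, p2 (b2 x) = bQ2 (p1 x))
    (hc6 : ∀ x : U1, p0 (s x) = sQ (p1 x))
    (hc7 : ∀ x : U2, p1 (t0 x) = tQ0 (p2 x))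
    (hc8 : ∀ x : U2, p1 (t1 x) = tQ1 (p2 x))
    -- the kernel Z^• is cogenerated in degree ≤ 1
    (hker : ∀ z : U2, p2 z = 1 → t0 z = 1 → t1 z = 1 → z = 1) :
    ∀ q1 : Q1, bQ1 q1 = bQ2 q1 * bQ0 q1 →
      ∃ u1 : U1, p1 u1 = q1 ∧ b1 u1 = b2 u1 * b0 u1 := by
  intro q1 hq
  obtain ⟨u, hu⟩ := hp1 q1
  -- first show p0 (s u) = 1
  have h0 : p0 (s u) = 1 := by
    have h1 : tQ1 (bQ1 q1) = tQ1 (bQ2 q1) * tQ1 (bQ0 q1) := by rw [hq, map_mul]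
    rw [← hu, ← hc4, ← hc5, ← hc3, ← hc8, ← hc8, ← hc8, ht11, ht12, ht10, hc1] at h1
    have h2 : aQ0 (p0 (s u)) = 1 := (left_eq_mul.mp h1)
    have h3 := congrArg sQ h2
    rw [map_one, ← hc1, ← hc6, hs0] at h3
    exact h3
  set v : U1 := u * (a1 (s u))⁻¹ with hv
  have hpv : p1 v = q1 := by
    rw [hv, map_mul, map_inv, hc2, h0, map_one, inv_one, mul_one, hu]
  have hsv : s v = 1 := by
    rw [hv, map_mul, map_inv, hs1, mul_inv_cancel]
  refine ⟨v, hpv, ?_⟩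
  have hz : (b2 v)⁻¹ * b1 v * (b0 v)⁻¹ = 1 := by
    apply hker
    · rw [map_mul, map_mul, map_inv, map_inv, hc3, hc4, hc5, hpv, hq]
      group
    · rw [map_mul, map_mul, map_inv, map_inv, ht02, ht01, ht00, hsv, map_one,
        inv_one, one_mul, mul_inv_cancel]
    · rw [map_mul, map_mul, map_inv, map_inv, ht12, ht11, ht10, hsv, map_one,
        inv_one, inv_mul_cancel, one_mul]
  have := mul_eq_one_iff_eq_inv.mp hz
  calc b1 v = b2 v * ((b2 v)⁻¹ * b1 v * (b0 v)⁻¹) * b0 v := by group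
    _ = b2 v * 1 * b0 v := by rw [hz]
    _ = b2 v * b0 v := by rw [mul_one]
end

section
/- Five-term cohomotopy exact sequence for a transitive cosimplicial action: let U^• be a (2-truncated) cosimplicial group acting on the right on a (2-truncated) cosimplicial set Q^• transitively in each degree, with a compatible basepoint (*₀, *₁, *₂), and let Z^n ≤ U^n be the stabilizer of *_n. Define δ : π⁰(Q^•) → π¹(Z^•) by δ(q₀) := [d¹(u₀)·d⁰(u₀)⁻¹] for any u₀ ∈ U⁰ with q₀ = *₀·u₀. Then: (a) δ is well-defined (d¹(u₀)d⁰(u₀)⁻¹ lies in Z¹ and is a cocycle of Z^•, and its class is independent of the choice of u₀); (b) the sequence 1 → π⁰(Z^•) → π⁰(U^•) → π⁰(Q^•) → π¹(Z^•) → π¹(U^•) is exact, where π⁰(U^•) acts on π⁰(Q^•) by the given action, the fibres of δ are exactly the π⁰(U^•)-orbits, and the kernel of π¹(Z^•) → π¹(U^•) is exactly the image of δ. -/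
/-- Five-term cohomotopy exact sequence for a transitive right action of a 2-truncated
cosimplicial group `U^•` on a 2-truncated cosimplicial set `Q^•` with compatible
basepoints `*ₙ`, the stabilizers forming the cosimplicial subgroup `Z^•`:
`1 → π⁰(Z^•) → π⁰(U^•) → π⁰(Q^•) → π¹(Z^•) → π¹(U^•)`, with
`δ(*₀·u₀) = [d¹(u₀)·d⁰(u₀)⁻¹]`, the fibres of `δ` being the `π⁰(U^•)`-orbits, and the
kernel of `π¹(Z^•) → π¹(U^•)` being the image of `δ`. -/
theorem five_term_cohomotopy_exact_sequence
    {U0 U1 U2 : Type*} [Group U0] [Group U1] [Group U2]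
    {Q0 Q1 Q2 : Type*}
    -- cofaces of U^•
    (a0 a1 : U0 →* U1) (b0 b1 b2 : U1 →* U2)
    (hd1 : ∀ x : U0, b1 (a0 x) = b0 (a0 x))
    (hd2 : ∀ x : U0, b2 (a0 x) = b0 (a1 x))
    (hd3 : ∀ x : U0, b2 (a1 x) = b1 (a1 x))
    -- cofaces of Q^•
    (qa0 qa1 : Q0 → Q1) (qb0 qb1 qb2 : Q1 → Q2)
    (hq1 : ∀ q : Q0, qb1 (qa0 q) = qb0 (qa0 q))
    (hq2 : ∀ q : Q0, qb2 (qa0 q) = qb0 (qa1 q))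
    (hq3 : ∀ q : Q0, qb2 (qa1 q) = qb1 (qa1 q))
    -- degreewise right actions of U^• on Q^•
    (σ0 : Q0 → U0 → Q0) (σ1 : Q1 → U1 → Q1) (σ2 : Q2 → U2 → Q2)
    (hσ0_one : ∀ q, σ0 q 1 = q)
    (hσ0_mul : ∀ q u v, σ0 (σ0 q u) v = σ0 q (u * v))
    (hσ1_one : ∀ q, σ1 q 1 = q)
    (hσ1_mul : ∀ q u v, σ1 (σ1 q u) v = σ1 q (u * v))
    (hσ2_one : ∀ q, σ2 q 1 = q)
    (hσ2_mul : ∀ q u v, σ2 (σ2 q u) v = σ2 q (u * v))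
    -- transitivity in each degree
    (htrans0 : ∀ q q' : Q0, ∃ u : U0, σ0 q u = q')
    (htrans1 : ∀ q q' : Q1, ∃ u : U1, σ1 q u = q')
    (htrans2 : ∀ q q' : Q2, ∃ u : U2, σ2 q u = q')
    -- compatibility of the action with the cofaces
    (hcomp0 : ∀ q u, qa0 (σ0 q u) = σ1 (qa0 q) (a0 u))
    (hcomp1 : ∀ q u, qa1 (σ0 q u) = σ1 (qa1 q) (a1 u))
    (hcomp2 : ∀ q u, qb0 (σ1 q u) = σ2 (qb0 q) (b0 u))
    (hcomp3 : ∀ q u, qb1 (σ1 q u) = σ2 (qb1 q) (b1 u))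
    (hcomp4 : ∀ q u, qb2 (σ1 q u) = σ2 (qb2 q) (b2 u))
    -- compatible basepoints
    (s0 : Q0) (s1 : Q1) (s2 : Q2)
    (hb0 : qa0 s0 = s1) (hb1 : qa1 s0 = s1)
    (hb2 : qb0 s1 = s2) (hb3 : qb1 s1 = s2) (hb4 : qb2 s1 = s2) :
    -- π⁰(U^•) acts on π⁰(Q^•)
    (∀ (q : Q0) (u : U0), qa0 q = qa1 q → a0 u = a1 u →
      qa0 (σ0 q u) = qa1 (σ0 q u)) ∧
    -- exactness at π⁰(U^•): kernel of π⁰(U) → π⁰(Q) is π⁰(Z)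
    (∀ u : U0, a0 u = a1 u →
      (σ0 s0 u = s0 ↔ ∃ z : U0, (σ0 s0 z = s0 ∧ a0 z = a1 z) ∧ z = u)) ∧
    -- δ is well-defined: d¹(u₀)·d⁰(u₀)⁻¹ stabilizes *₁ and is a cocycle of Z^•
    (∀ u0 : U0, qa0 (σ0 s0 u0) = qa1 (σ0 s0 u0) →
      σ1 s1 (a1 u0 * (a0 u0)⁻¹) = s1 ∧
      b1 (a1 u0 * (a0 u0)⁻¹) =
        b2 (a1 u0 * (a0 u0)⁻¹) * b0 (a1 u0 * (a0 u0)⁻¹)) ∧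
    -- δ is independent of the chosen u₀
    (∀ u0 u0' : U0, σ0 s0 u0 = σ0 s0 u0' →
      qa0 (σ0 s0 u0) = qa1 (σ0 s0 u0) →
      ∃ v0 : U0, σ0 s0 v0 = s0 ∧
        a1 u0' * (a0 u0')⁻¹ = (a1 v0)⁻¹ * (a1 u0 * (a0 u0)⁻¹) * a0 v0) ∧
    -- the fibres of δ are exactly the π⁰(U^•)-orbits on π⁰(Q^•)
    (∀ u0 u0' : U0,
      qa0 (σ0 s0 u0) = qa1 (σ0 s0 u0) → qa0 (σ0 s0 u0') = qa1 (σ0 s0 u0') →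
      ((∃ v0 : U0, σ0 s0 v0 = s0 ∧
          a1 u0' * (a0 u0')⁻¹ = (a1 v0)⁻¹ * (a1 u0 * (a0 u0)⁻¹) * a0 v0) ↔
        ∃ w0 : U0, a0 w0 = a1 w0 ∧ σ0 (σ0 s0 u0) w0 = σ0 s0 u0')) ∧
    -- the kernel of π¹(Z^•) → π¹(U^•) is exactly the image of δ
    (∀ ζ : U1, σ1 s1 ζ = s1 → b1 ζ = b2 ζ * b0 ζ →
      ((∃ v0 : U0, ζ = (a1 v0)⁻¹ * a0 v0) ↔
        ∃ u0 : U0, qa0 (σ0 s0 u0) = qa1 (σ0 s0 u0) ∧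
          ∃ v0 : U0, σ0 s0 v0 = s0 ∧
            ζ = (a1 v0)⁻¹ * (a1 u0 * (a0 u0)⁻¹) * a0 v0)) := by
  
  -- key lemma: u0 gives a π⁰-point iff σ1 s1 (a0 u0) = σ1 s1 (a1 u0)
  have hpt : ∀ u0 : U0, (qa0 (σ0 s0 u0) = qa1 (σ0 s0 u0)) ↔
      σ1 s1 (a0 u0) = σ1 s1 (a1 u0) := by
    intro u0
    rw [hcomp0, hcomp1, hb0, hb1]
  refine ⟨?_, ?_, ?_, ?_, ?_, ?_⟩
  · intro q u hq hu
    rw [hcomp0, hcomp1, hq, hu]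
  · intro u hu
    constructor
    · intro h; exact ⟨u, ⟨h, hu⟩, rfl⟩
    · rintro ⟨z, ⟨hz, -⟩, rfl⟩; exact hz
  · intro u0 hq
    constructor
    · have key : σ1 s1 (a0 u0) = σ1 s1 (a1 u0) := (hpt u0).1 hq
      calc σ1 s1 (a1 u0 * (a0 u0)⁻¹)
          = σ1 (σ1 s1 (a1 u0)) (a0 u0)⁻¹ := (hσ1_mul _ _ _).symm
        _ = σ1 (σ1 s1 (a0 u0)) (a0 u0)⁻¹ := by rw [key]
        _ = σ1 s1 (a0 u0 * (a0 u0)⁻¹) := hσ1_mul _ _ _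
        _ = s1 := by rw [mul_inv_cancel, hσ1_one]
    · simp only [map_mul, map_inv, hd3, hd1, hd2]
      group
  · intro u0 u0' hs _
    refine ⟨u0 * u0'⁻¹, ?_, ?_⟩
    · rw [← hσ0_mul, hs, hσ0_mul, mul_inv_cancel, hσ0_one]
    · simp only [map_mul, map_inv]
      group
  · intro u0 u0' hq hq'
    constructor
    · rintro ⟨v0, hv, heq⟩
      refine ⟨u0⁻¹ * v0 * u0', ?_, ?_⟩
      · have h1 : a1 v0 * (a1 u0' * (a0 u0')⁻¹) * (a0 v0)⁻¹
            = a1 u0 * (a0 u0)⁻¹ := by rw [heq]; group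
        have h2 : a1 (u0⁻¹ * v0 * u0') = a0 (u0⁻¹ * v0 * u0') := by
          simp only [map_mul, map_inv]
          have : a1 v0 * a1 u0' * (a0 u0')⁻¹ * (a0 v0)⁻¹ * a0 v0 * a0 u0'
              = a1 u0 * (a0 u0)⁻¹ * a0 v0 * a0 u0' := by
            rw [← h1]; group
          calc (a1 u0)⁻¹ * a1 v0 * a1 u0'
              = (a1 u0)⁻¹ * (a1 v0 * a1 u0' * (a0 u0')⁻¹ * (a0 v0)⁻¹ * a0 v0 * a0 u0') := by
                group
            _ = (a1 u0)⁻¹ * (a1 u0 * (a0 u0)⁻¹ * a0 v0 * a0 u0') := by rw [this]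
            _ = (a0 u0)⁻¹ * a0 v0 * a0 u0' := by group
        exact h2.symm
      · calc σ0 (σ0 s0 u0) (u0⁻¹ * v0 * u0')
            = σ0 s0 (u0 * (u0⁻¹ * v0 * u0')) := hσ0_mul _ _ _
          _ = σ0 s0 (v0 * u0') := by group
          _ = σ0 (σ0 s0 v0) u0' := (hσ0_mul _ _ _).symm
          _ = σ0 s0 u0' := by rw [hv]
    · rintro ⟨w0, hw, hsw⟩
      refine ⟨u0 * w0 * u0'⁻¹, ?_, ?_⟩
      · rw [← hσ0_mul, ← hσ0_mul, hsw, hσ0_mul, mul_inv_cancel, hσ0_one]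
      · simp only [map_mul, map_inv]
        rw [hw]
        group
  · intro ζ hζs hζc
    constructor
    · rintro ⟨v0, rfl⟩
      refine ⟨v0⁻¹, ?_, 1, hσ0_one s0, ?_⟩
      · rw [hpt]
        have h1 : σ1 (σ1 s1 ((a1 v0)⁻¹ * a0 v0)) (a0 v0)⁻¹ = σ1 s1 (a0 v0)⁻¹ := by
          rw [hζs]
        rw [hσ1_mul] at h1
        rw [show (a1 v0)⁻¹ * a0 v0 * (a0 v0)⁻¹ = (a1 v0)⁻¹ by group] at h1
        rw [map_inv, map_inv]
        exact h1.symm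
      · simp only [map_one, map_inv]
        group
    · rintro ⟨u0, -, v0, -, rfl⟩
      exact ⟨u0⁻¹ * v0, by simp only [map_mul, map_inv]; group⟩
end

section
/- Non-emptiness of inverse limits of torsors under a Mittag–Leffler system of groups: let (G_n)_{n∈ℕ} be an inverse system of groups (with transition homomorphisms f_{m,n} : G_m → G_n for m ≥ n) satisfying the Mittag–Leffler condition, and let (T_n)_{n∈ℕ} be an inverse system of nonempty sets equipped with simply transitive left G_n-actions compatible with the transition maps (t_{m,n}(g·x) = f_{m,n}(g)·t_{m,n}(x)). Then the inverse limit lim T_n is nonempty. -/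
/-- Non-emptiness of the inverse limit of an inverse system of nonempty torsors under an
inverse system of groups satisfying the Mittag–Leffler condition. -/
theorem inverseLimit_of_torsors_nonempty
    (G : ℕ → Type) [∀ n, Group (G n)]
    (f : ∀ ⦃n m : ℕ⦄, n ≤ m → (G m →* G n))
    (hf_id : ∀ (n : ℕ) (h : n ≤ n) (x : G n), f h x = x)
    (hf_comp : ∀ {n m k : ℕ} (h1 : n ≤ m) (h2 : m ≤ k) (x : G k),
      f h1 (f h2 x) = f (h1.trans h2) x)
    (T : ℕ → Type) (hT : ∀ n, Nonempty (T n))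
    (t : ∀ ⦃n m : ℕ⦄, n ≤ m → T m → T n)
    (ht_id : ∀ (n : ℕ) (h : n ≤ n) (x : T n), t h x = x)
    (ht_comp : ∀ {n m k : ℕ} (h1 : n ≤ m) (h2 : m ≤ k) (x : T k),
      t h1 (t h2 x) = t (h1.trans h2) x)
    -- compatible simply transitive left actions
    (σ : ∀ n, G n → T n → T n)
    (hσ_one : ∀ (n : ℕ) (x : T n), σ n 1 x = x)
    (hσ_mul : ∀ (n : ℕ) (g h : G n) (x : T n), σ n (g * h) x = σ n g (σ n h x))
    (hσ_trans : ∀ (n : ℕ) (x y : T n), ∃! g : G n, σ n g x = y)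
    (hcompat : ∀ {n m : ℕ} (h : n ≤ m) (g : G m) (x : T m),
      t h (σ m g x) = σ n (f h g) (t h x))
    -- the Mittag–Leffler condition for the system of groups
    (hML : ∀ n : ℕ, ∃ m0 : ℕ, ∃ h0 : n ≤ m0, ∀ m : ℕ, m0 ≤ m → ∀ h : n ≤ m,
      Set.range (f h) = Set.range (f h0)) :
    ∃ x : ∀ n, T n, ∀ {n m : ℕ} (h : n ≤ m), t h (x m) = x n := by
  classical
  -- The system (T n) satisfies the Mittag-Leffler condition
  have TML : ∀ n : ℕ, ∃ m0 : ℕ, ∃ h0 : n ≤ m0, ∀ m : ℕ, m0 ≤ m → ∀ h : n ≤ m,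
      Set.range (t h) = Set.range (t h0) := by
    intro n
    obtain ⟨m0, h0, hstab⟩ := hML n
    refine ⟨m0, h0, fun m hm h => ?_⟩
    obtain ⟨w⟩ := hT m
    apply Set.eq_of_subset_of_subset
    · rintro _ ⟨v, rfl⟩
      exact ⟨t hm v, ht_comp h0 hm v⟩
    · rintro _ ⟨v, rfl⟩
      obtain ⟨g, hg, -⟩ := hσ_trans m0 (t hm w) v
      have hmem : f h0 g ∈ Set.range (f h) := by
        rw [hstab m hm h]; exact ⟨g, rfl⟩
      obtain ⟨g', hg'⟩ := hmem
      refine ⟨σ m g' w, ?_⟩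
      rw [hcompat, hg', ← hg, hcompat h0, ht_comp]
  choose m0 h0 hstab using TML
  -- eventual images
  set S : ∀ n, Set (T n) := fun n => Set.range (t (h0 n)) with hS
  have hSsub : ∀ n m (h : n ≤ m), S n ⊆ Set.range (t h) := by
    intro n m h
    rcases le_total m (m0 n) with hm | hm
    · rintro _ ⟨v, rfl⟩
      exact ⟨t hm v, ht_comp h hm v⟩
    · exact (hstab n m hm h).ge
  -- one-step surjectivity between eventual images
  have hstep : ∀ n (y : T n), y ∈ S n →
      ∃ z : T (n+1), z ∈ S (n+1) ∧ t (Nat.le_succ n) z = y := by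
    intro n y hy
    set M := max (m0 (n+1)) (n+1) with hM
    have hnM : n ≤ M := le_trans (Nat.le_succ n) (le_max_right _ _)
    obtain ⟨v, hv⟩ := hSsub n M hnM hy
    refine ⟨t (le_max_right (m0 (n+1)) (n+1)) v, ?_, ?_⟩
    · have := hstab (n+1) M (le_max_left _ _) (le_max_right _ _)
      have hmem : t (le_max_right (m0 (n+1)) (n+1)) v ∈
          Set.range (t (le_max_right (m0 (n+1)) (n+1))) := ⟨v, rfl⟩
      exact Set.mem_of_mem_of_subset hmem this.le
    · rw [ht_comp]; exact hv
  have hS0 : ∃ y, y ∈ S 0 := by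
    obtain ⟨w⟩ := hT (m0 0); exact ⟨t (h0 0) w, ⟨w, rfl⟩⟩
  -- construct a compatible sequence by recursion
  let x : ∀ n, {y : T n // y ∈ S n} := fun n => Nat.rec ⟨hS0.choose, hS0.choose_spec⟩
    (fun n p => ⟨(hstep n p.1 p.2).choose, (hstep n p.1 p.2).choose_spec.1⟩) n
  have hx : ∀ n, t (Nat.le_succ n) (x (n+1)).1 = (x n).1 := fun n =>
    (hstep n (x n).1 (x n).2).choose_spec.2
  refine ⟨fun n => (x n).1, ?_⟩
  intro n m h
  induction m, h using Nat.le_induction with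
  | base => exact ht_id n _ _
  | succ m hm ih =>
    calc t (hm.trans (Nat.le_succ m)) (x (m+1)).1
        = t hm (t (Nat.le_succ m) (x (m+1)).1) := (ht_comp hm (Nat.le_succ m) _).symm
      _ = t hm (x m).1 := by rw [hx m]
      _ = (x n).1 := ih
end

section
/- For a nilpotent group with a twisted conjugation action, transitivity is equivalent to triviality of the fixed subgroup: let N be a nilpotent group, φ : N → N an automorphism, and suppose N admits a φ-stable central series 1 = N_k ⊴ ⋯ ⊴ N_0 = N whose successive quotients N_i/N_{i+1} are finite-dimensional ℚ-vector spaces (uniquely divisible torsion-free abelian groups of finite rank). Consider the right action of N on itself by n : w ↦ n⁻¹·w·φ(n). Then this action is transitive if and only if the stabilizer of the identity is trivial, i.e., if and only if φ(n) = n implies n = 1. -/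
/-! Write `L n = n⁻¹ φ(n)` (the Lang map). Transitivity of the twisted action says that `L` is
onto, and triviality of the fixed points that `L` is one-to-one, since
`L a = L b ↔ φ (b a⁻¹) = b a⁻¹`.
On a central layer `N_i / N_{i+1}`, `L` is the endomorphism `φ̄ - 1` of a finite-dimensional
`ℚ`-vector space, so it is injective iff surjective. Inducting along the series, "injective iff
surjective modulo `N_i`" passes to `N_{i+1}`: centrality lets one correct a solution modulo `N_i`
by an element of `N_i` solving the equation on the layer. -/

namespace DivisibleHull

theorem coe_surjective {V : Type*} [AddCommMonoid V]
    (hdiv : ∀ n : ℕ, n ≠ 0 → ∀ v : V, ∃ u, n • u = v) :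
    Function.Surjective ((↑) : V → DivisibleHull V) := by
  intro x
  induction x with
  | mk m s =>
    obtain ⟨u, hu⟩ := hdiv s s.ne_zero m
    exact ⟨u, mk_eq_mk.mpr ⟨1, by simp [hu]⟩⟩

theorem coe_mem_span_of_mem_closure {V : Type*} [AddCommGroup V] {S : Set V} {v : V}
    (hv : v ∈ AddSubgroup.closure S) :
    (v : DivisibleHull V) ∈ Submodule.span ℚ (((↑) : V → DivisibleHull V) '' S) := by
  induction hv using AddSubgroup.closure_induction with
  | mem w hw => exact Submodule.subset_span (Set.mem_image_of_mem _ hw)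
  | zero => simp
  | add u w _ _ hu hw => simpa using add_mem hu hw
  | neg u _ hu => simpa [← neg_mk] using neg_mem hu

end DivisibleHull

theorem AddMonoidHom.injective_iff_surjective_of_divisible_of_finite_rank
    {V : Type*} [AddCommGroup V] [IsAddTorsionFree V]
    (hdiv : ∀ n : ℕ, n ≠ 0 → ∀ v : V, ∃ u, n • u = v)
    {S : Set V} (hS : S.Finite)
    (hrank : ∀ v : V, ∃ n : ℕ, n ≠ 0 ∧ n • v ∈ AddSubgroup.closure S)
    (f : V →+ V) : Function.Injective f ↔ Function.Surjective f := by
  have hspan : Submodule.span ℚ (((↑) : V → DivisibleHull V) '' S) = ⊤ := by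
    refine Submodule.eq_top_iff'.mpr fun x ↦ ?_
    obtain ⟨v, rfl⟩ := DivisibleHull.coe_surjective hdiv x
    obtain ⟨n, hn, hnv⟩ := hrank v
    have := Submodule.smul_mem _ (n : ℚ)⁻¹ (DivisibleHull.coe_mem_span_of_mem_closure hnv)
    have hcoe : ((n • v : V) : DivisibleHull V) = (n : ℚ) • (v : DivisibleHull V) := by
      rw [Nat.cast_smul_eq_nsmul]; exact map_nsmul (DivisibleHull.coeAddMonoidHom V) n v
    rwa [hcoe, inv_smul_smul₀ (by exact_mod_cast hn)] at this
  have : Module.Finite ℚ (DivisibleHull V) := ⟨⟨(hS.image _).toFinset, by simpa using hspan⟩⟩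
  -- `V` is its own divisible hull, hence a finite-dimensional `ℚ`-vector space.
  let e : V ≃+ DivisibleHull V := AddEquiv.ofBijective (DivisibleHull.coeAddMonoidHom V)
    ⟨DivisibleHull.coe_injective, DivisibleHull.coe_surjective hdiv⟩
  let g := ((e : V →+ DivisibleHull V).comp (f.comp e.symm.toAddMonoidHom)).toRatLinearMap
  have hg : (g : DivisibleHull V → DivisibleHull V) = e ∘ f ∘ e.symm := rfl
  have := LinearMap.injective_iff_surjective (f := g)
  rwa [hg, EquivLike.comp_injective, EquivLike.injective_comp, EquivLike.comp_surjective,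
    EquivLike.surjective_comp] at this

section LangHom

open scoped IsMulCommutative

variable {G : Type*} [Group G] (φ : G →* G) {A : Subgroup G}

def langHom (hA : A ≤ Subgroup.center G) (hφA : ∀ a ∈ A, φ a ∈ A) : A →* A :=
  MonoidHom.mk' (fun a ↦ ⟨a⁻¹ * φ a, mul_mem (inv_mem a.2) (hφA a a.2)⟩) fun a b ↦ by
    have hb := Subgroup.mem_center_iff.mp (hA (inv_mem b.2)) ((a : G)⁻¹ * φ a)
    ext
    calc ((a * b : A) : G)⁻¹ * φ (a * b : A) = (b : G)⁻¹ * ((a : G)⁻¹ * φ a) * φ b := by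
          simp [mul_assoc]
      _ = (a : G)⁻¹ * φ a * ((b : G)⁻¹ * φ b) := by rw [← hb, mul_assoc]

theorem Subgroup.mem_closure_preimage_subtype {S : Set G} (hSA : S ⊆ A) {a : A}
    (ha : (a : G) ∈ Subgroup.closure S) : a ∈ Subgroup.closure (A.subtype ⁻¹' S) := by
  rwa [← Subgroup.mem_map_iff_mem A.subtype_injective, MonoidHom.map_closure,
    Set.image_preimage_eq_of_subset (by simpa using hSA)]

theorem fixedPoints_trivial_iff_lang_surjective_of_le_center
    (hA : A ≤ Subgroup.center G) (hφA : ∀ a ∈ A, φ a ∈ A)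
    (hroot : ∀ m : ℕ, m ≠ 0 → ∀ a ∈ A, ∃ b ∈ A, b ^ m = a)
    (hroot_unique : ∀ m : ℕ, m ≠ 0 → ∀ a ∈ A, ∀ b ∈ A, a ^ m = b ^ m → a = b)
    {S : Set G} (hS : S.Finite) (hSA : S ⊆ A)
    (hrank : ∀ a ∈ A, ∃ m : ℕ, m ≠ 0 ∧ a ^ m ∈ Subgroup.closure S) :
    (∀ a ∈ A, φ a = a → a = 1) ↔ ∀ a ∈ A, ∃ b ∈ A, b⁻¹ * φ b = a := by
  have : IsMulCommutative A := isMulCommutative_iff.mpr fun a b ↦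
    Subtype.ext (Subgroup.mem_center_iff.mp (hA b.2) a)
  have : IsMulTorsionFree A := ⟨fun m hm a b h ↦
    Subtype.ext (hroot_unique m hm a a.2 b b.2 (congrArg Subtype.val h))⟩
  set L := langHom φ hA hφA
  have hL : ∀ a : A, (L a : G) = (a : G)⁻¹ * φ a := fun _ ↦ rfl
  have key : Function.Injective L ↔ Function.Surjective L :=
    (MonoidHom.toAdditive L).injective_iff_surjective_of_divisible_of_finite_rank
      (S := Additive.toMul ⁻¹' (A.subtype ⁻¹' S))
      (fun n hn v ↦ by
        obtain ⟨b, hbA, hb⟩ := hroot n hn _ v.toMul.2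
        exact ⟨.ofMul ⟨b, hbA⟩, by rw [← ofMul_pow]; exact congrArg _ (Subtype.ext hb)⟩)
      ((hS.preimage A.subtype_injective.injOn).preimage Additive.toMul.injective.injOn)
      (fun v ↦ by
        obtain ⟨m, hm, hvm⟩ := hrank _ v.toMul.2
        refine ⟨m, hm, ?_⟩
        rw [← Subgroup.toAddSubgroup_closure, Additive.mem_toAddSubgroup, toMul_nsmul]
        exact Subgroup.mem_closure_preimage_subtype hSA (by simpa using hvm))
  rw [injective_iff_map_eq_one] at key
  simpa only [Function.Surjective, Subtype.forall, Subtype.exists, Subtype.ext_iff, hL,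
    OneMemClass.coe_one, inv_mul_eq_one, @eq_comm _ _ (φ _), exists_prop] using key

end LangHom

section Layer

variable {N : Type*} [Group N] (φ : N →* N) {H K : Subgroup N}

theorem fixedPoints_trivial_iff_lang_surjective_of_central_layer [K.Normal]
    (hcentral : ∀ x ∈ H, ∀ u : N, x * u * x⁻¹ * u⁻¹ ∈ K)
    (hφH : ∀ x ∈ H, φ x ∈ H) (hφK : ∀ x ∈ K, φ x ∈ K)
    (hdiv : ∀ x ∈ H, ∀ m : ℕ, 0 < m → ∃ y ∈ H, x⁻¹ * y ^ m ∈ K)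
    (huniq : ∀ m : ℕ, 0 < m → ∀ y ∈ H, ∀ z ∈ H, (y ^ m)⁻¹ * z ^ m ∈ K → y⁻¹ * z ∈ K)
    (hfin : ∃ S : Finset N, (S : Set N) ⊆ H ∧
      ∀ x ∈ H, ∃ m : ℕ, 0 < m ∧ x ^ m ∈ Subgroup.closure ((S : Set N) ∪ K)) :
    (∀ y ∈ H, y⁻¹ * φ y ∈ K → y ∈ K) ↔ ∀ w ∈ H, ∃ y ∈ H, (y⁻¹ * φ y)⁻¹ * w ∈ K := by
  obtain ⟨S, hSH, hS⟩ := hfin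
  have hA : H.map (QuotientGroup.mk' K) ≤ Subgroup.center (N ⧸ K) := by
    rintro _ ⟨x, hx, rfl⟩
    refine Subgroup.mem_center_iff.mpr fun g ↦ ?_
    induction g using QuotientGroup.induction_on with
    | H u =>
      rw [QuotientGroup.mk'_apply, ← QuotientGroup.mk_mul, ← QuotientGroup.mk_mul,
        QuotientGroup.eq]
      simpa [mul_assoc] using hcentral x⁻¹ (inv_mem hx) u⁻¹
  have key := fixedPoints_trivial_iff_lang_surjective_of_le_center
    (QuotientGroup.map K K φ hφK) hA
    (by rintro _ ⟨x, hx, rfl⟩; exact ⟨φ x, hφH x hx, rfl⟩)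
    (by
      rintro m hm _ ⟨x, hx, rfl⟩
      obtain ⟨y, hy, hxy⟩ := hdiv x hx m (Nat.pos_of_ne_zero hm)
      exact ⟨y, ⟨y, hy, rfl⟩, (QuotientGroup.eq.mpr hxy).symm⟩)
    (by
      rintro m hm _ ⟨y, hy, rfl⟩ _ ⟨z, hz, rfl⟩ hyz
      exact QuotientGroup.eq.mpr (huniq m (Nat.pos_of_ne_zero hm) y hy z hz
        (QuotientGroup.eq.mp hyz)))
    (S.finite_toSet.image ((↑) : N → N ⧸ K))
    (by rintro _ ⟨s, hs, rfl⟩; exact ⟨s, hSH hs, rfl⟩)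
    (by
      rintro _ ⟨x, hx, rfl⟩
      obtain ⟨m, hm, hxm⟩ := hS x hx
      refine ⟨m, hm.ne', ?_⟩
      have hle : (Subgroup.closure ((S : Set N) ∪ K)).map (QuotientGroup.mk' K) ≤
          Subgroup.closure (((↑) : N → N ⧸ K) '' S) := by
        rw [MonoidHom.map_closure, Subgroup.closure_le, Set.image_union]
        refine Set.union_subset Subgroup.subset_closure ?_
        rintro _ ⟨k, hk, rfl⟩
        simp [(QuotientGroup.eq_one_iff k).mpr hk]
      exact hle ⟨x ^ m, hxm, rfl⟩)
  have hmap : ∀ x : N, QuotientGroup.map K K φ hφK x = (φ x : N ⧸ K) := fun _ ↦ rfl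
  simp only [Subgroup.mem_map, forall_exists_index, and_imp, forall_apply_eq_imp_iff₂,
    exists_exists_and_eq_and, QuotientGroup.mk'_apply, hmap,
    ← QuotientGroup.mk_inv, ← QuotientGroup.mk_mul, QuotientGroup.eq,
    QuotientGroup.eq_one_iff] at key
  have hinv : ∀ y : N, (φ y)⁻¹ * y ∈ K ↔ y⁻¹ * φ y ∈ K := fun y ↦ by
    rw [← inv_mem_iff, mul_inv_rev, inv_inv]
  simpa only [hinv] using key

end Layer

section Modulo

variable {N : Type*} [Group N] (φ : N →* N)

def FixedPointsTrivialModulo (K : Subgroup N) : Prop :=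
  ∀ n : N, n⁻¹ * φ n ∈ K → n ∈ K

/-- `n ↦ n⁻¹ φ(n)` is the orbit map of `1` for the twisted conjugation action, so this says that
the action is transitive on `N ⧸ K`. -/
def LangSurjectiveModulo (K : Subgroup N) : Prop :=
  ∀ w : N, ∃ n : N, (n⁻¹ * φ n)⁻¹ * w ∈ K

variable {φ}

theorem lang_mul (n y : N) : (n * y)⁻¹ * φ (n * y) = y⁻¹ * (n⁻¹ * φ n) * φ y := by
  simp [mul_assoc]

variable {H K : Subgroup N}

theorem FixedPointsTrivialModulo.of_le
    (hcentral : ∀ x ∈ H, ∀ u : N, x * u * x⁻¹ * u⁻¹ ∈ K) (hKH : K ≤ H)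
    (hK : FixedPointsTrivialModulo φ K)
    (hlayer : ∀ w ∈ H, ∃ y ∈ H, (y⁻¹ * φ y)⁻¹ * w ∈ K) : FixedPointsTrivialModulo φ H := by
  intro n hn
  set a := n⁻¹ * φ n with ha
  obtain ⟨y, hy, hya⟩ := hlayer a⁻¹ (inv_mem hn)
  have hny : (n * y)⁻¹ * φ (n * y) = (y⁻¹ * a * y * a⁻¹) * (a * (y⁻¹ * φ y)) := by
    rw [lang_mul, ha]; group
  have hnyK : n * y ∈ K := hK _ <| by
    rw [hny]
    refine mul_mem (by simpa using hcentral _ (inv_mem hy) a) ?_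
    simpa using inv_mem hya
  simpa using mul_mem (hKH hnyK) (inv_mem hy)

theorem LangSurjectiveModulo.of_le
    (hcentral : ∀ x ∈ H, ∀ u : N, x * u * x⁻¹ * u⁻¹ ∈ K) (hH : LangSurjectiveModulo φ H)
    (hlayer : ∀ w ∈ H, ∃ y ∈ H, (y⁻¹ * φ y)⁻¹ * w ∈ K) : LangSurjectiveModulo φ K := by
  intro w
  obtain ⟨n, hn⟩ := hH w
  set d := (n⁻¹ * φ n)⁻¹ * w with hd
  obtain ⟨y, hy, hyd⟩ := hlayer d hn
  refine ⟨n * y, ?_⟩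
  have hny : ((n * y)⁻¹ * φ (n * y))⁻¹ * w =
      ((y⁻¹ * φ y)⁻¹ * d) * (d⁻¹ * y⁻¹ * d * y) * (y⁻¹ * w⁻¹ * y * w) := by
    rw [lang_mul, hd]; group
  rw [hny]
  exact mul_mem (mul_mem hyd (by simpa using hcentral _ (inv_mem hn) y⁻¹))
    (by simpa using hcentral _ (inv_mem hy) w⁻¹)

theorem fixedPointsTrivialModulo_iff_langSurjectiveModulo_of_le
    (hcentral : ∀ x ∈ H, ∀ u : N, x * u * x⁻¹ * u⁻¹ ∈ K) (hKH : K ≤ H)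
    (hlayer : (∀ y ∈ H, y⁻¹ * φ y ∈ K → y ∈ K) ↔ ∀ w ∈ H, ∃ y ∈ H, (y⁻¹ * φ y)⁻¹ * w ∈ K)
    (hH : FixedPointsTrivialModulo φ H ↔ LangSurjectiveModulo φ H) :
    FixedPointsTrivialModulo φ K ↔ LangSurjectiveModulo φ K := by
  constructor
  · intro hK
    have hlayer_surj := hlayer.mp fun y _ ↦ hK y
    exact (hH.mp (hK.of_le hcentral hKH hlayer_surj)).of_le hcentral hlayer_surj
  · intro hK
    have hHfix := hH.mpr fun w ↦ (hK w).imp fun n hn ↦ hKH hn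
    have hlayer_surj : ∀ w ∈ H, ∃ y ∈ H, (y⁻¹ * φ y)⁻¹ * w ∈ K := fun w hw ↦ by
      obtain ⟨n, hn⟩ := hK w
      refine ⟨n, hHfix n ?_, hn⟩
      simpa only [mul_inv_cancel_right, inv_mem_iff] using mul_mem (hKH hn) (inv_mem hw)
    intro n hn
    exact hlayer.mpr hlayer_surj n (hHfix n (hKH hn)) hn

theorem fixedPointsTrivialModulo_bot_iff :
    FixedPointsTrivialModulo φ ⊥ ↔ ∀ n : N, φ n = n → n = 1 := by
  simp only [FixedPointsTrivialModulo, Subgroup.mem_bot, inv_mul_eq_one]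
  exact forall_congr' fun n ↦ by rw [eq_comm]

theorem langSurjectiveModulo_bot_iff :
    LangSurjectiveModulo φ ⊥ ↔ ∀ w w' : N, ∃ n : N, n⁻¹ * w * φ n = w' := by
  simp only [LangSurjectiveModulo, Subgroup.mem_bot, inv_mul_eq_one]
  refine ⟨fun h w w' ↦ ?_, fun h w ↦ (h 1 w).imp fun n hn ↦ by simpa using hn⟩
  obtain ⟨a, rfl⟩ := h w
  obtain ⟨b, rfl⟩ := h w'
  exact ⟨a⁻¹ * b, by simp [mul_assoc]⟩

end Modulo

/-- For a nilpotent group `N` with an automorphism `φ` and a `φ`-stable central series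
whose successive quotients are finite-dimensional `ℚ`-vector spaces, the twisted
conjugation action `n : w ↦ n⁻¹·w·φ(n)` of `N` on itself is transitive if and only if
the stabilizer of the identity is trivial, i.e. `φ(n) = n → n = 1`. -/
theorem twisted_conjugation_transitive_iff_trivial_fixed_points
    {N : Type*} [Group N] (φ : MulAut N) (k : ℕ) (Nseq : ℕ → Subgroup N)
    (h_top : Nseq 0 = ⊤) (h_bot : Nseq k = ⊥)
    (h_mono : ∀ i : ℕ, Nseq (i + 1) ≤ Nseq i)
    (h_norm : ∀ i : ℕ, ∀ x ∈ Nseq i, ∀ u : N, u * x * u⁻¹ ∈ Nseq i)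
    (h_central : ∀ i : ℕ, ∀ x ∈ Nseq i, ∀ u : N, x * u * x⁻¹ * u⁻¹ ∈ Nseq (i + 1))
    (h_stable : ∀ i : ℕ, ∀ x : N, x ∈ Nseq i ↔ φ x ∈ Nseq i)
    -- the quotients are uniquely divisible (i.e. ℚ-vector spaces) ...
    (h_div : ∀ i : ℕ, ∀ x ∈ Nseq i, ∀ m : ℕ, 0 < m →
      ∃ y ∈ Nseq i, x⁻¹ * y ^ m ∈ Nseq (i + 1))
    (h_uniq : ∀ i : ℕ, ∀ m : ℕ, 0 < m → ∀ y ∈ Nseq i, ∀ z ∈ Nseq i,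
      (y ^ m)⁻¹ * z ^ m ∈ Nseq (i + 1) → y⁻¹ * z ∈ Nseq (i + 1))
    -- ... and of finite rank: finitely many elements generate each quotient up to
    -- torsion (i.e. up to taking roots)
    (h_fin : ∀ i : ℕ, ∃ S : Finset N, (↑S : Set N) ⊆ (Nseq i : Set N) ∧
      ∀ x ∈ Nseq i, ∃ m : ℕ, 0 < m ∧
        x ^ m ∈ Subgroup.closure ((↑S : Set N) ∪ (Nseq (i + 1) : Set N))) :
    (∀ w w' : N, ∃ n : N, n⁻¹ * w * φ n = w') ↔ (∀ n : N, φ n = n → n = 1) := by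
  have hlevels : ∀ i, FixedPointsTrivialModulo (φ : N →* N) (Nseq i) ↔
      LangSurjectiveModulo (φ : N →* N) (Nseq i) := by
    intro i
    induction i with
    | zero =>
      rw [h_top]
      exact iff_of_true (fun n _ ↦ Subgroup.mem_top n) fun _ ↦ ⟨1, Subgroup.mem_top _⟩
    | succ i ih =>
      have : (Nseq (i + 1)).Normal := ⟨h_norm (i + 1)⟩
      refine fixedPointsTrivialModulo_iff_langSurjectiveModulo_of_le (h_central i) (h_mono i)
        ?_ ih
      exact fixedPoints_trivial_iff_lang_surjective_of_central_layer _ (h_central i)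
        (fun x ↦ (h_stable i x).mp) (fun x ↦ (h_stable (i + 1) x).mp) (h_div i) (h_uniq i)
        (h_fin i)
  have hk := hlevels k
  rw [h_bot, fixedPointsTrivialModulo_bot_iff, langSurjectiveModulo_bot_iff] at hk
  exact hk.symm
end
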